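/- For a smooth map Θ : ℝ³ → ℝ³, the Piola identity holds: for each i, ∑ₖ ∂ₖ (Cof DΘ)_{ik} = 0, i.e., the columns of the cofactor matrix of the Jacobian are divergence-free. -/

import Mathlib

open Matrix

local notation "E3" => EuclideanSpace ℝ (Fin 3)

/-- The Jacobian matrix of a map `Θ : ℝ³ → ℝ³`: `(DΘ(x))_{ij} = ∂ⱼΘⁱ(x)`. -/
noncomputable def jacMat (Θ : E3 → E3) (x : E3) : Matrix (Fin 3) (Fin 3) ℝ :=
  fun i j => fderiv ℝ Θ x (EuclideanSpace.single j 1) i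

/-- The cofactor matrix, `Cof A = (adjugate A)ᵀ`, so that `(Cof A)ᵀ A = (det A)·Id`. -/
noncomputable def cofMat (A : Matrix (Fin 3) (Fin 3) ℝ) : Matrix (Fin 3) (Fin 3) ℝ :=
  (Matrix.adjugate A)ᵀ

/-- partial derivative ∂_q Θ_p -/
noncomputable def gg (Θ : E3 → E3) (p q : Fin 3) (y : E3) : ℝ :=
  fderiv ℝ Θ y (EuclideanSpace.single q 1) p

lemma gg_diff {Θ : E3 → E3} (hΘ : ContDiff ℝ (⊤ : ℕ∞) Θ) (p q : Fin 3) :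
    Differentiable ℝ (gg Θ p q) := by
  have hf' : ContDiff ℝ (⊤ : ℕ∞) (fderiv ℝ Θ) := hΘ.fderiv_right (by simp)
  exact (((EuclideanSpace.proj p).comp
      (ContinuousLinearMap.apply ℝ E3 (EuclideanSpace.single q 1 : E3))).differentiable.comp
    (hf'.differentiable (by simp)) : _)

lemma gg_fderiv {Θ : E3 → E3} (hΘ : ContDiff ℝ (⊤ : ℕ∞) Θ) (x : E3) (p q k : Fin 3) :
    fderiv ℝ (gg Θ p q) x (EuclideanSpace.single k 1)
      = fderiv ℝ (fderiv ℝ Θ) x (EuclideanSpace.single k 1) (EuclideanSpace.single q 1) p := by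
  have hf' : ContDiff ℝ (⊤ : ℕ∞) (fderiv ℝ Θ) := hΘ.fderiv_right (by simp)
  have hx : HasFDerivAt (fderiv ℝ Θ) (fderiv ℝ (fderiv ℝ Θ) x) x :=
    (hf'.differentiable (by simp) x).hasFDerivAt
  set φ := (EuclideanSpace.proj p).comp
      (ContinuousLinearMap.apply ℝ E3 (EuclideanSpace.single q 1 : E3)) with hφ
  have h := φ.hasFDerivAt.comp x hx
  have hfun : gg Θ p q = ⇑φ ∘ fderiv ℝ Θ := by funext y; rfl
  rw [hfun, h.fderiv]
  rfl

/-- second partial derivative ∂_k ∂_q Θ_p -/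
noncomputable def DD (Θ : E3 → E3) (x : E3) (p q k : Fin 3) : ℝ :=
  fderiv ℝ (fderiv ℝ Θ) x (EuclideanSpace.single k 1) (EuclideanSpace.single q 1) p

lemma DD_symm {Θ : E3 → E3} (hΘ : ContDiff ℝ (⊤ : ℕ∞) Θ) (x : E3) (p q k : Fin 3) :
    DD Θ x p q k = DD Θ x p k q := by
  have hf' : ContDiff ℝ (⊤ : ℕ∞) (fderiv ℝ Θ) := hΘ.fderiv_right (by simp)
  have hx : HasFDerivAt (fderiv ℝ Θ) (fderiv ℝ (fderiv ℝ Θ) x) x :=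
    (hf'.differentiable (by simp) x).hasFDerivAt
  have hs := second_derivative_symmetric
    (fun y => (hΘ.differentiable (by simp) y).hasFDerivAt) hx
    (EuclideanSpace.single k 1) (EuclideanSpace.single q 1)
  unfold DD
  rw [hs]

lemma key {Θ : E3 → E3} (hΘ : ContDiff ℝ (⊤ : ℕ∞) Θ) (x : E3) (a b c d p q r s k : Fin 3) :
    fderiv ℝ (fun y => gg Θ a b y * gg Θ c d y - gg Θ p q y * gg Θ r s y) x
        (EuclideanSpace.single k 1)
      = DD Θ x a b k * gg Θ c d x + gg Θ a b x * DD Θ x c d k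
        - (DD Θ x p q k * gg Θ r s x + gg Θ p q x * DD Θ x r s k) := by
  rw [fderiv_fun_sub ((gg_diff hΘ a b x).fun_mul (gg_diff hΘ c d x))
      ((gg_diff hΘ p q x).fun_mul (gg_diff hΘ r s x)),
    fderiv_fun_mul (gg_diff hΘ a b x) (gg_diff hΘ c d x),
    fderiv_fun_mul (gg_diff hΘ p q x) (gg_diff hΘ r s x)]
  simp only [ContinuousLinearMap.coe_sub', Pi.sub_apply, ContinuousLinearMap.add_apply,
    ContinuousLinearMap.coe_smul', Pi.smul_apply, smul_eq_mul, gg_fderiv hΘ]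
  show _ = DD Θ x a b k * gg Θ c d x + gg Θ a b x * DD Θ x c d k
        - (DD Θ x p q k * gg Θ r s x + gg Θ p q x * DD Θ x r s k)
  unfold DD
  ring

/-- **Piola identity.** For a smooth map `Θ : ℝ³ → ℝ³`, the columns of the
cofactor matrix of the Jacobian are divergence-free: for each `i`,
`∑ₖ ∂ₖ (Cof DΘ)_{ik} = 0`. -/
theorem piola_identity
    (Θ : E3 → E3) (hΘ : ContDiff ℝ (⊤ : ℕ∞) Θ) :
    ∀ x : E3, ∀ i : Fin 3,
      ∑ k : Fin 3, fderiv ℝ (fun y => cofMat (jacMat Θ y) i k) x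
        (EuclideanSpace.single k 1) = 0 := by
  intro x i
  have hJ : ∀ y : E3, jacMat Θ y = Matrix.of fun p q => gg Θ p q y := fun y => rfl
  fin_cases i
  · have e0 : (fun y => cofMat (jacMat Θ y) (0:Fin 3) (0:Fin 3))
        = fun y => gg Θ 1 1 y * gg Θ 2 2 y - gg Θ 1 2 y * gg Θ 2 1 y := by
      funext y
      simp [cofMat, hJ y, Matrix.adjugate_fin_three]
    have e1 : (fun y => cofMat (jacMat Θ y) (0:Fin 3) (1:Fin 3))
        = fun y => gg Θ 1 2 y * gg Θ 2 0 y - gg Θ 1 0 y * gg Θ 2 2 y := by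
      funext y
      simp [cofMat, hJ y, Matrix.adjugate_fin_three]
      ring
    have e2 : (fun y => cofMat (jacMat Θ y) (0:Fin 3) (2:Fin 3))
        = fun y => gg Θ 1 0 y * gg Θ 2 1 y - gg Θ 1 1 y * gg Θ 2 0 y := by
      funext y
      simp [cofMat, hJ y, Matrix.adjugate_fin_three]
    simp only [Fin.zero_eta, Fin.mk_one, Fin.isValue, Fin.reduceFinMk]
    rw [Fin.sum_univ_three, e0, e1, e2, key hΘ x, key hΘ x, key hΘ x]
    linear_combination gg Θ 2 2 x * DD_symm hΘ x 1 1 0 + gg Θ 1 1 x * DD_symm hΘ x 2 2 0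
      - gg Θ 2 1 x * DD_symm hΘ x 1 2 0 - gg Θ 1 2 x * DD_symm hΘ x 2 1 0
      + gg Θ 2 0 x * DD_symm hΘ x 1 2 1 - gg Θ 1 0 x * DD_symm hΘ x 2 2 1
  · have e0 : (fun y => cofMat (jacMat Θ y) (1:Fin 3) (0:Fin 3))
        = fun y => gg Θ 0 2 y * gg Θ 2 1 y - gg Θ 0 1 y * gg Θ 2 2 y := by
      funext y
      simp [cofMat, hJ y, Matrix.adjugate_fin_three]
      ring
    have e1 : (fun y => cofMat (jacMat Θ y) (1:Fin 3) (1:Fin 3))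
        = fun y => gg Θ 0 0 y * gg Θ 2 2 y - gg Θ 0 2 y * gg Θ 2 0 y := by
      funext y
      simp [cofMat, hJ y, Matrix.adjugate_fin_three]
    have e2 : (fun y => cofMat (jacMat Θ y) (1:Fin 3) (2:Fin 3))
        = fun y => gg Θ 0 1 y * gg Θ 2 0 y - gg Θ 0 0 y * gg Θ 2 1 y := by
      funext y
      simp [cofMat, hJ y, Matrix.adjugate_fin_three]
      ring
    simp only [Fin.zero_eta, Fin.mk_one, Fin.isValue, Fin.reduceFinMk]
    rw [Fin.sum_univ_three, e0, e1, e2, key hΘ x, key hΘ x, key hΘ x]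
    linear_combination gg Θ 2 1 x * DD_symm hΘ x 0 2 0 + gg Θ 0 2 x * DD_symm hΘ x 2 1 0
      - gg Θ 2 2 x * DD_symm hΘ x 0 1 0 - gg Θ 0 1 x * DD_symm hΘ x 2 2 0
      + gg Θ 0 0 x * DD_symm hΘ x 2 2 1 - gg Θ 2 0 x * DD_symm hΘ x 0 2 1
  · have e0 : (fun y => cofMat (jacMat Θ y) (2:Fin 3) (0:Fin 3))
        = fun y => gg Θ 0 1 y * gg Θ 1 2 y - gg Θ 0 2 y * gg Θ 1 1 y := by
      funext y
      simp [cofMat, hJ y, Matrix.adjugate_fin_three]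
    have e1 : (fun y => cofMat (jacMat Θ y) (2:Fin 3) (1:Fin 3))
        = fun y => gg Θ 0 2 y * gg Θ 1 0 y - gg Θ 0 0 y * gg Θ 1 2 y := by
      funext y
      simp [cofMat, hJ y, Matrix.adjugate_fin_three]
      ring
    have e2 : (fun y => cofMat (jacMat Θ y) (2:Fin 3) (2:Fin 3))
        = fun y => gg Θ 0 0 y * gg Θ 1 1 y - gg Θ 0 1 y * gg Θ 1 0 y := by
      funext y
      simp [cofMat, hJ y, Matrix.adjugate_fin_three]
    simp only [Fin.zero_eta, Fin.mk_one, Fin.isValue, Fin.reduceFinMk]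
    rw [Fin.sum_univ_three, e0, e1, e2, key hΘ x, key hΘ x, key hΘ x]
    linear_combination gg Θ 1 2 x * DD_symm hΘ x 0 1 0 + gg Θ 0 1 x * DD_symm hΘ x 1 2 0
      - gg Θ 1 1 x * DD_symm hΘ x 0 2 0 - gg Θ 0 2 x * DD_symm hΘ x 1 1 0
      + gg Θ 1 0 x * DD_symm hΘ x 0 2 1 - gg Θ 0 0 x * DD_symm hΘ x 1 2 1
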